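/- Let 0 ≤ ρ ≤ 1, σ : ℤ → ℂ with |σ(ξ)| ≤ C|ξ|^{-ρ} for ξ ≠ 0, q ∈ (1,∞), r ∈ ℝ, and s ∈ (0,1] with r + 1/2 - ρ < s. Then there is C' such that for every 2π-periodic Hölder continuous f of order s: (∑_{m=0}^{∞} 2^{mrq} (∑_{2^m ≤ |ξ| < 2^{m+1}} |σ(ξ)f̂(ξ)|)^q)^{1/q} ≤ C' ‖f‖_{Λ^s}. -/

import Mathlib

noncomputable def fourierCoef (f : ℝ → ℂ) (ξ : ℤ) : ℂ :=
  (1 / (2 * Real.pi)) * ∫ x in (0:ℝ)..(2 * Real.pi), f x * Complex.exp (-(Complex.I * (ξ:ℂ) * (x:ℂ)))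

noncomputable def dyadicBlock (m : ℕ) : Finset ℤ :=
  (Finset.Icc (-(2^(m+1) : ℤ)) (2^(m+1))).filter fun ξ => 2^m ≤ |ξ| ∧ |ξ| < 2^(m+1)

/-! With `h = π / 2 ^ (m + 1)` the difference `f - f (· - h)` has Fourier coefficients
`(1 - e^{-iξh}) f̂ ξ`, and `|1 - e^{-iξh}| ≥ 1` on the `m`-th dyadic block since `|ξh| ∈ [π/2, π]`
there. Parseval for the difference, whose sup norm is at most `B h ^ s`, therefore bounds the
`ℓ²` norm of `f̂` on the block by `B h ^ s ≈ B 2 ^ (-m s)`. Together with `|σ| ≤ C 2 ^ (-m ρ)` on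
the block and Cauchy–Schwarz over its `≤ 8 · 2 ^ m` frequencies, the block sum is
`≲ B 2 ^ (m (1/2 - ρ - s))`, and the weighted `ℓ^q` sum is dominated by a geometric series of
ratio `2 ^ (q (r + 1/2 - ρ - s)) < 1`. -/

open MeasureTheory Finset AddCircle Real

theorem AddCircle.fourier_add_apply {T : ℝ} (n : ℤ) (x y : AddCircle T) :
    fourier n (x + y) = fourier n x * fourier n y := by
  simp only [fourier_apply, smul_add, toCircle_add, Circle.coe_mul]

section AddCircle

variable {T : ℝ} [Fact (0 < T)] {E : Type*} [NormedAddCommGroup E] [NormedSpace ℂ E]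

theorem fourierCoeff_comp_sub (F : AddCircle T → E) (a : AddCircle T) (n : ℤ) :
    fourierCoeff (fun x => F (x - a)) n = fourier (-n) a • fourierCoeff F n := by
  have h := integral_sub_right_eq_self (μ := haarAddCircle)
    (fun x => fourier (-n) (x + a) • F x) a
  simp only [sub_add_cancel] at h
  simp only [fourierCoeff, h, ← integral_smul, fourier_add_apply, mul_comm _ (fourier (-n) a : ℂ),
    mul_smul]

theorem fourierCoeff_sub_comp_sub {F : AddCircle T → E} (hF : Integrable F haarAddCircle)
    (a : AddCircle T) (n : ℤ) :
    fourierCoeff (fun x => F x - F (x - a)) n = (1 - fourier (-n) a) • fourierCoeff F n := by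
  rw [sub_smul, one_smul, ← fourierCoeff_comp_sub]
  simp only [fourierCoeff, smul_sub]
  exact integral_sub (hF.fourier_smul _) ((hF.comp_sub_right a).fourier_smul _)

theorem sum_sq_norm_fourierCoeff_le {G : AddCircle T → ℂ} {M : ℝ}
    (hG : AEStronglyMeasurable G haarAddCircle) (hM : ∀ x, ‖G x‖ ≤ M) (s : Finset ℤ) :
    ∑ n ∈ s, ‖fourierCoeff G n‖ ^ 2 ≤ M ^ 2 := by
  have hL2 : MemLp G 2 haarAddCircle := .of_bound hG M (ae_of_all _ hM)
  have hParseval := hasSum_sq_fourierCoeff (hL2.toLp G)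
  rw [fourierCoeff_congr_ae hL2.coeFn_toLp] at hParseval
  calc ∑ n ∈ s, ‖fourierCoeff G n‖ ^ 2
      ≤ ∫ x, ‖hL2.toLp G x‖ ^ 2 ∂haarAddCircle :=
        sum_le_hasSum s (fun _ _ => by positivity) hParseval
    _ ≤ ‖∫ x, ‖hL2.toLp G x‖ ^ 2 ∂haarAddCircle‖ := Real.le_norm_self _
    _ ≤ M ^ 2 * haarAddCircle.real Set.univ := by
      refine norm_integral_le_of_norm_le_const ?_
      filter_upwards [hL2.coeFn_toLp] with x hx
      rw [hx, norm_pow, norm_norm]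
      exact pow_le_pow_left₀ (norm_nonneg _) (hM x) 2
    _ = M ^ 2 := by simp

theorem sum_sq_norm_fourierCoeff_le_of_norm_sub_le {F : AddCircle T → ℂ} (hF : Continuous F)
    {a : AddCircle T} {M : ℝ} (hM : ∀ x, ‖F x - F (x - a)‖ ≤ M) {s : Finset ℤ}
    (hs : ∀ n ∈ s, 1 ≤ ‖1 - (fourier (-n) a : ℂ)‖) :
    ∑ n ∈ s, ‖fourierCoeff F n‖ ^ 2 ≤ M ^ 2 := by
  have hFi : Integrable F haarAddCircle :=
    hF.integrable_of_hasCompactSupport (.of_compactSpace F)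
  calc ∑ n ∈ s, ‖fourierCoeff F n‖ ^ 2
      ≤ ∑ n ∈ s, ‖fourierCoeff (fun x => F x - F (x - a)) n‖ ^ 2 := by
        refine sum_le_sum fun n hn => ?_
        rw [fourierCoeff_sub_comp_sub hFi, smul_eq_mul, norm_mul]
        gcongr
        exact le_mul_of_one_le_left (norm_nonneg _) (hs n hn)
    _ ≤ M ^ 2 := sum_sq_norm_fourierCoeff_le
        (hF.sub (hF.comp (continuous_sub_right a))).aestronglyMeasurable hM s

end AddCircle

theorem Complex.one_le_norm_one_sub_exp_I_mul {θ : ℝ} (h₁ : π / 2 ≤ |θ|) (h₂ : |θ| ≤ π) :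
    1 ≤ ‖1 - Complex.exp (Complex.I * θ)‖ := by
  have hsin := Real.mul_le_sin (x := |θ| / 2) (by positivity) (by linarith)
  rw [norm_sub_rev, Complex.norm_exp_I_mul_ofReal_sub_one, norm_mul, Real.norm_eq_abs,
    Real.norm_eq_abs, abs_two, Real.abs_sin_eq_sin_abs_of_abs_le_pi (by rw [abs_div]; linarith),
    abs_div, abs_two]
  have : 2 / π * (π / 2 / 2) ≤ 2 / π * (|θ| / 2) := by gcongr
  rw [show 2 / π * (π / 2 / 2) = 1 / 2 by field_simp] at this
  linarith

theorem Finset.sum_le_mul_of_card_le_sq_of_sum_sq_le {ι : Type*} {t : Finset ι} {g : ι → ℝ}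
    {N L : ℝ} (hN : 0 ≤ N) (hL : 0 ≤ L) (hcard : (#t : ℝ) ≤ N ^ 2)
    (hsq : ∑ i ∈ t, g i ^ 2 ≤ L ^ 2) : ∑ i ∈ t, g i ≤ N * L :=
  le_of_pow_le_pow_left₀ two_ne_zero (by positivity) <| by
    rw [mul_pow]
    exact sq_sum_le_card_mul_sum_sq.trans (mul_le_mul hcard hsq (by positivity) (by positivity))

theorem tsum_rpow_le_of_le_geometric {a : ℕ → ℝ} {q D t : ℝ} (hq : 0 < q) (ht₀ : 0 ≤ t)
    (ht₁ : t < 1) (ha₀ : ∀ m, 0 ≤ a m) (ha : ∀ m, a m ≤ D * t ^ m) :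
    (∑' m, a m ^ q) ^ (1 / q) ≤ D * ((1 - t ^ q)⁻¹) ^ (1 / q) := by
  have hD : 0 ≤ D := by simpa using (ha₀ 0).trans (ha 0)
  have htq₀ : 0 ≤ t ^ q := Real.rpow_nonneg ht₀ q
  have htq₁ : t ^ q < 1 := Real.rpow_lt_one ht₀ ht₁ hq
  have hterm : ∀ m, a m ^ q ≤ D ^ q * (t ^ q) ^ m := fun m => by
    rw [Real.rpow_pow_comm ht₀, ← Real.mul_rpow hD (by positivity)]
    exact Real.rpow_le_rpow (ha₀ m) (ha m) hq.le
  have hgeom : Summable fun m : ℕ => D ^ q * (t ^ q) ^ m :=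
    (summable_geometric_of_lt_one htq₀ htq₁).mul_left _
  have hsum : ∑' m, a m ^ q ≤ D ^ q * (1 - t ^ q)⁻¹ := by
    rw [← tsum_geometric_of_lt_one htq₀ htq₁, ← tsum_mul_left]
    have hsummable := hgeom.of_nonneg_of_le (fun m => Real.rpow_nonneg (ha₀ m) q) hterm
    exact hsummable.tsum_le_tsum hterm hgeom
  calc (∑' m, a m ^ q) ^ (1 / q)
      ≤ (D ^ q * (1 - t ^ q)⁻¹) ^ (1 / q) :=
        Real.rpow_le_rpow (tsum_nonneg fun m => Real.rpow_nonneg (ha₀ m) q) hsum (by positivity)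
    _ = D * ((1 - t ^ q)⁻¹) ^ (1 / q) := by
        rw [Real.mul_rpow (by positivity) (by simp; linarith), ← Real.rpow_mul hD,
          mul_one_div_cancel hq.ne', Real.rpow_one]

instance Real.fact_zero_lt_two_pi : Fact (0 < 2 * π) := ⟨two_pi_pos⟩

theorem fourier_coe_two_pi (n : ℤ) (x : ℝ) :
    fourier n (x : AddCircle (2 * π)) = Complex.exp (Complex.I * (n * x : ℝ)) := by
  rw [fourier_coe_apply]
  congr 1
  push_cast
  field_simp

theorem fourierCoeff_lift_eq_fourierCoef {f : ℝ → ℂ} (hf : Function.Periodic f (2 * π)) (n : ℤ) :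
    fourierCoeff hf.lift n = fourierCoef f n := by
  rw [fourierCoeff_eq_intervalIntegral _ n 0, fourierCoef, zero_add, Complex.real_smul]
  push_cast
  congr 1
  refine intervalIntegral.integral_congr fun x _ => ?_
  rw [fourier_coe_two_pi, Function.Periodic.lift_coe, smul_eq_mul, mul_comm]
  push_cast
  ring_nf

theorem mem_dyadicBlock {m : ℕ} {ξ : ℤ} : ξ ∈ dyadicBlock m ↔ 2 ^ m ≤ |ξ| ∧ |ξ| < 2 ^ (m + 1) := by
  simp only [dyadicBlock, mem_filter, mem_Icc, and_iff_right_iff_imp, and_imp]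
  intro _ h
  exact abs_le.mp h.le

theorem abs_mem_Icc_of_mem_dyadicBlock {m : ℕ} {ξ : ℤ} (h : ξ ∈ dyadicBlock m) :
    (2 : ℝ) ^ m ≤ |(ξ : ℝ)| ∧ |(ξ : ℝ)| ≤ 2 ^ (m + 1) := by
  obtain ⟨h₁, h₂⟩ := mem_dyadicBlock.mp h
  exact ⟨by exact_mod_cast h₁, by exact_mod_cast h₂.le⟩

theorem card_dyadicBlock_le (m : ℕ) : (#(dyadicBlock m) : ℝ) ≤ 8 * 2 ^ m := by
  have h : #(dyadicBlock m) ≤ #(Icc (-(2 ^ (m + 1) : ℤ)) (2 ^ (m + 1))) :=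
    card_le_card (filter_subset _ _)
  rw [Int.card_Icc, sub_neg_eq_add] at h
  have : ((2 : ℤ) ^ (m + 1) + 1 + 2 ^ (m + 1)).toNat ≤ 8 * 2 ^ m := by
    zify [Int.toNat_of_nonneg (by positivity : (0:ℤ) ≤ 2 ^ (m + 1) + 1 + 2 ^ (m + 1))]
    rw [pow_succ]; linarith [one_le_pow₀ (M₀ := ℤ) (a := 2) (n := m) (by norm_num)]
  exact_mod_cast h.trans this

theorem sum_sq_norm_fourierCoef_dyadicBlock_le {f : ℝ → ℂ} {B s : ℝ} (hf : Continuous f)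
    (hper : Function.Periodic f (2 * π)) (hB : ∀ x y : ℝ, ‖f (x - y) - f x‖ ≤ B * |y| ^ s)
    (m : ℕ) :
    ∑ ξ ∈ dyadicBlock m, ‖fourierCoef f ξ‖ ^ 2 ≤ (B * (π / 2 ^ (m + 1)) ^ s) ^ 2 := by
  set h : ℝ := π / 2 ^ (m + 1)
  have hh : 0 < h := by positivity
  have hπ : 2 ^ (m + 1) * h = π := by simp only [h]; field_simp
  have hM : ∀ x : AddCircle (2 * π), ‖hper.lift x - hper.lift (x - h)‖ ≤ B * h ^ s := by
    intro x
    induction x using QuotientAddGroup.induction_on with | H y => ?_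
    rw [← QuotientAddGroup.mk_sub]
    simp only [Function.Periodic.lift_coe]
    rw [norm_sub_rev]
    simpa [abs_of_pos hh] using hB y h
  have hs : ∀ ξ ∈ dyadicBlock m, 1 ≤ ‖1 - (fourier (-ξ) (h : AddCircle (2 * π)) : ℂ)‖ := by
    intro ξ hξ
    obtain ⟨h₁, h₂⟩ := abs_mem_Icc_of_mem_dyadicBlock hξ
    rw [fourier_coe_two_pi]
    refine Complex.one_le_norm_one_sub_exp_I_mul ?_ ?_ <;>
      rw [Int.cast_neg, neg_mul, abs_neg, abs_mul, abs_of_pos hh]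
    · calc π / 2 = 2 ^ m * h := by rw [← hπ, pow_succ]; ring
        _ ≤ |(ξ : ℝ)| * h := by gcongr
    · calc |(ξ : ℝ)| * h ≤ 2 ^ (m + 1) * h := by gcongr
        _ = π := hπ
  simp_rw [← fourierCoeff_lift_eq_fourierCoef hper]
  exact sum_sq_norm_fourierCoeff_le_of_norm_sub_le (hf.quotient_liftOn' _) hM hs

theorem sum_norm_mul_fourierCoef_dyadicBlock_le {σ : ℤ → ℂ} {f : ℝ → ℂ} {ρ C B s : ℝ}
    (hρ : 0 ≤ ρ) (hs : 0 ≤ s) (hC : 0 ≤ C) (hσ : ∀ ξ : ℤ, ξ ≠ 0 → ‖σ ξ‖ ≤ C * |(ξ:ℝ)| ^ (-ρ))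
    (hf : Continuous f) (hper : Function.Periodic f (2 * π))
    (hB : ∀ x y : ℝ, ‖f (x - y) - f x‖ ≤ B * |y| ^ s) (m : ℕ) :
    ∑ ξ ∈ dyadicBlock m, ‖σ ξ * fourierCoef f ξ‖
      ≤ √8 * C * π ^ s * B * ((2 : ℝ) ^ (1 / 2 - ρ - s)) ^ m := by
  have hB0 : 0 ≤ B := by simpa using (norm_nonneg _).trans (hB 0 1)
  have hσ_block : ∀ ξ ∈ dyadicBlock m, ‖σ ξ‖ ≤ C * ((2 : ℝ) ^ (-ρ)) ^ m := by
    intro ξ hξ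
    have h₁ := (abs_mem_Icc_of_mem_dyadicBlock hξ).1
    have hξ0 : ξ ≠ 0 := by rintro rfl; simp at h₁; linarith [pow_pos two_pos (M₀ := ℝ) m]
    rw [Real.rpow_pow_comm zero_le_two]
    exact (hσ ξ hξ0).trans <| mul_le_mul_of_nonneg_left
      (Real.rpow_le_rpow_of_nonpos (by positivity) h₁ (neg_nonpos.mpr hρ)) hC
  have hstep : B * (π / 2 ^ (m + 1)) ^ s ≤ B * π ^ s * ((2 : ℝ) ^ (-s)) ^ m := by
    rw [Real.rpow_pow_comm zero_le_two, Real.rpow_neg (by positivity), mul_assoc,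
      ← div_eq_mul_inv, ← Real.div_rpow pi_pos.le (by positivity)]
    gcongr
    · norm_num
    · exact Nat.le_succ m
  have hl2 : ∑ ξ ∈ dyadicBlock m, ‖σ ξ * fourierCoef f ξ‖ ^ 2
      ≤ (C * ((2 : ℝ) ^ (-ρ)) ^ m * (B * π ^ s * ((2 : ℝ) ^ (-s)) ^ m)) ^ 2 := by
    calc ∑ ξ ∈ dyadicBlock m, ‖σ ξ * fourierCoef f ξ‖ ^ 2
        ≤ ∑ ξ ∈ dyadicBlock m, (C * ((2 : ℝ) ^ (-ρ)) ^ m) ^ 2 * ‖fourierCoef f ξ‖ ^ 2 := by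
          refine sum_le_sum fun ξ hξ => ?_
          rw [norm_mul, mul_pow]
          gcongr
          exact hσ_block ξ hξ
      _ ≤ (C * ((2 : ℝ) ^ (-ρ)) ^ m) ^ 2 * (B * π ^ s * ((2 : ℝ) ^ (-s)) ^ m) ^ 2 := by
          rw [← mul_sum]
          gcongr
          exact (sum_sq_norm_fourierCoef_dyadicBlock_le hf hper hB m).trans
            (pow_le_pow_left₀ (by positivity) hstep 2)
      _ = _ := (mul_pow _ _ 2).symm
  have hcard : (#(dyadicBlock m) : ℝ) ≤ (√8 * √2 ^ m) ^ 2 := by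
    rw [mul_pow, ← pow_mul, mul_comm m 2, pow_mul, Real.sq_sqrt (by norm_num),
      Real.sq_sqrt zero_le_two]
    exact card_dyadicBlock_le m
  have ht : (2 : ℝ) ^ (1 / 2 - ρ - s) = √2 * 2 ^ (-ρ) * 2 ^ (-s) := by
    rw [sub_eq_add_neg, sub_eq_add_neg, Real.rpow_add two_pos, Real.rpow_add two_pos,
      Real.sqrt_eq_rpow]
  calc ∑ ξ ∈ dyadicBlock m, ‖σ ξ * fourierCoef f ξ‖
      ≤ √8 * √2 ^ m * (C * ((2 : ℝ) ^ (-ρ)) ^ m * (B * π ^ s * ((2 : ℝ) ^ (-s)) ^ m)) :=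
        sum_le_mul_of_card_le_sq_of_sum_sq_le (by positivity) (by positivity) hcard hl2
    _ = √8 * C * π ^ s * B * ((2 : ℝ) ^ (1 / 2 - ρ - s)) ^ m := by
        rw [ht]
        ring

theorem holder_triebel_core_general (ρ C r s q : ℝ)
    (hρ0 : 0 ≤ ρ) (hq0 : 1 < q)
    (hs0 : 0 < s) (hrs : r + 1/2 - ρ < s)
    (σ : ℤ → ℂ) (hσ : ∀ ξ : ℤ, ξ ≠ 0 → ‖σ ξ‖ ≤ C * |(ξ:ℝ)| ^ (-ρ)) :
    ∃ C' : ℝ, ∀ f : ℝ → ℂ, Continuous f → (∀ x, f (x + 2 * Real.pi) = f x) →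
      ∀ A B : ℝ, (∀ x, ‖f x‖ ≤ A) →
      (∀ x y : ℝ, ‖f (x - y) - f x‖ ≤ B * |y| ^ s) →
      (∑' m : ℕ, (2:ℝ) ^ ((m:ℝ) * r * q) *
          (∑ ξ ∈ dyadicBlock m, ‖σ ξ * fourierCoef f ξ‖) ^ q) ^ (1/q)
        ≤ C' * (A + B) := by
  have hq : 0 < q := zero_lt_one.trans hq0
  have hC : 0 ≤ C := by simpa using (norm_nonneg _).trans (hσ 1 one_ne_zero)
  set t : ℝ := 2 ^ (r + (1 / 2 - ρ - s))
  have ht₀ : 0 ≤ t := by positivity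
  have ht₁ : t < 1 := Real.rpow_lt_one_of_one_lt_of_neg one_lt_two (by linarith)
  have hc : 0 ≤ ((1 - t ^ q)⁻¹) ^ (1 / q) :=
    Real.rpow_nonneg (inv_nonneg.mpr (sub_nonneg.mpr (Real.rpow_le_one ht₀ ht₁.le hq.le))) _
  refine ⟨√8 * C * π ^ s * ((1 - t ^ q)⁻¹) ^ (1 / q), fun f hf hper A B hA hB => ?_⟩
  have hblock : ∀ m : ℕ, 2 ^ ((m : ℝ) * r) * ∑ ξ ∈ dyadicBlock m, ‖σ ξ * fourierCoef f ξ‖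
      ≤ √8 * C * π ^ s * B * t ^ m := fun m => by
    rw [mul_comm (m : ℝ), Real.rpow_mul_natCast zero_le_two,
      show t = 2 ^ r * 2 ^ (1 / 2 - ρ - s) from Real.rpow_add two_pos _ _, mul_pow]
    calc _ ≤ (2 ^ r) ^ m * (√8 * C * π ^ s * B * ((2 : ℝ) ^ (1 / 2 - ρ - s)) ^ m) := by
          gcongr
          exact sum_norm_mul_fourierCoef_dyadicBlock_le hρ0 hs0.le hC hσ hf hper hB m
      _ = _ := by ring
  have hterm : ∀ m : ℕ, (2 : ℝ) ^ ((m : ℝ) * r * q) *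
      (∑ ξ ∈ dyadicBlock m, ‖σ ξ * fourierCoef f ξ‖) ^ q
        = (2 ^ ((m : ℝ) * r) * ∑ ξ ∈ dyadicBlock m, ‖σ ξ * fourierCoef f ξ‖) ^ q := fun m => by
    rw [Real.mul_rpow (by positivity) (sum_nonneg fun _ _ => norm_nonneg _),
      ← Real.rpow_mul zero_le_two]
  simp_rw [hterm]
  calc _ ≤ √8 * C * π ^ s * B * ((1 - t ^ q)⁻¹) ^ (1 / q) :=
        tsum_rpow_le_of_le_geometric hq ht₀ ht₁
          (fun m => mul_nonneg (by positivity) (sum_nonneg fun _ _ => norm_nonneg _)) hblock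
    _ = (√8 * C * π ^ s * ((1 - t ^ q)⁻¹) ^ (1 / q)) * B := by ring
    _ ≤ _ := mul_le_mul_of_nonneg_left (le_add_of_nonneg_left ((norm_nonneg _).trans (hA 0)))
        (mul_nonneg (by positivity) hc)

theorem holder_triebel_core (ρ C r s q : ℝ)
    (hρ0 : 0 ≤ ρ) (hρ1 : ρ ≤ 1) (hq0 : 1 < q)
    (hs0 : 0 < s) (hs1 : s ≤ 1) (hrs : r + 1/2 - ρ < s)
    (σ : ℤ → ℂ) (hσ : ∀ ξ : ℤ, ξ ≠ 0 → ‖σ ξ‖ ≤ C * |(ξ:ℝ)| ^ (-ρ)) :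
    ∃ C' : ℝ, ∀ f : ℝ → ℂ, Continuous f → (∀ x, f (x + 2 * Real.pi) = f x) →
      ∀ A B : ℝ, (∀ x, ‖f x‖ ≤ A) →
      (∀ x y : ℝ, ‖f (x - y) - f x‖ ≤ B * |y| ^ s) →
      (∑' m : ℕ, (2:ℝ) ^ ((m:ℝ) * r * q) *
          (∑ ξ ∈ dyadicBlock m, ‖σ ξ * fourierCoef f ξ‖) ^ q) ^ (1/q)
        ≤ C' * (A + B) :=
  holder_triebel_core_general ρ C r s q hρ0 hq0 hs0 hrs σ hσ
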